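/- arXiv:2511.19000 — 3 statements merged into one kernel-verified Lean document; each statement's English description precedes it below -/
import Mathlib

section
/- Let X be a quasi-Banach function space satisfying (P5) over a σ-finite nonatomic measure space, and suppose the family of simple averaging operators A_E f = (μ(E)^{-1} ∫_E f dμ) χ_E, over all E with 0<μ(E)<∞, is uniformly bounded on X with constant C. Then for every t∈(0,∞), max{ φ*_X(t)·φ^★_{X'}(t), φ^★_X(t)·φ*_{X'}(t) } ≤ C t. -/
open MeasureTheory Filter Set Topology
open scoped ENNReal NNReal

noncomputable section

variable {α : Type*} [MeasurableSpace α]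

/-- A quasi-Banach function space over a measure `μ`, given by a quasi-Banach
function norm acting on nonnegative extended-real-valued functions;
properties (P1)–(P4) of the paper. -/
structure QBFS (μ : Measure α) where
  N : (α → ℝ≥0∞) → ℝ≥0∞
  congr : ∀ f g : α → ℝ≥0∞, f =ᵐ[μ] g → N f = N g
  eq_zero_iff : ∀ f : α → ℝ≥0∞, (N f = 0 ↔ f =ᵐ[μ] 0)
  smul : ∀ (c : ℝ≥0∞) (f : α → ℝ≥0∞), c ≠ ∞ → N (fun x => c * f x) = c * N f
  C : ℝ≥0∞
  one_le_C : 1 ≤ C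
  C_ne_top : C ≠ ∞
  triangle : ∀ f g : α → ℝ≥0∞, N (fun x => f x + g x) ≤ C * (N f + N g)
  mono : ∀ f g : α → ℝ≥0∞, (∀ᵐ x ∂μ, f x ≤ g x) → N f ≤ N g
  fatou : ∀ f : ℕ → α → ℝ≥0∞, (∀ n, ∀ᵐ x ∂μ, f n x ≤ f (n + 1) x) →
    N (fun x => ⨆ n, f n x) = ⨆ n, N (f n)
  chi_lt_top : ∀ E : Set α, μ E < ∞ → N (E.indicator 1) < ∞

variable {μ : Measure α}

/-- The norm of the characteristic function of `E`. -/
def QBFS.chi (X : QBFS μ) (E : Set α) : ℝ≥0∞ := X.N (E.indicator 1)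

/-- The minimal fundamental function `φ*_X`. -/
def phiMin (X : QBFS μ) (t : ℝ≥0∞) : ℝ≥0∞ :=
  ⨅ E ∈ {E : Set α | MeasurableSet E ∧ μ E = t}, X.chi E

/-- The maximal fundamental function `φ^★_X`. -/
def phiMax (X : QBFS μ) (t : ℝ≥0∞) : ℝ≥0∞ :=
  ⨆ E ∈ {E : Set α | MeasurableSet E ∧ μ E = t}, X.chi E

/-- `X` is admissible: `φ*_X(t) > 0` for every `t ∈ (0,∞)`. -/
def Admissible (X : QBFS μ) : Prop := ∀ t : ℝ≥0∞, 0 < t → t ≠ ∞ → 0 < phiMin X t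

/-- Property (P5): integral domination on sets of finite measure. -/
def P5 (X : QBFS μ) : Prop :=
  ∀ E : Set α, MeasurableSet E → μ E < ∞ →
    ∃ c : ℝ≥0∞, c ≠ ∞ ∧ ∀ f : α → ℝ≥0∞, (∫⁻ x in E, f x ∂μ) ≤ c * X.N f

/-- The associate norm `‖g‖_{X'} = sup_{‖f‖_X ≤ 1} ∫ f g dμ`. -/
def assocN (X : QBFS μ) (g : α → ℝ≥0∞) : ℝ≥0∞ :=
  ⨆ f ∈ {f : α → ℝ≥0∞ | X.N f ≤ 1}, ∫⁻ x, f x * g x ∂μ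

/-- Minimal fundamental function of the associate space. -/
def phiMinAssoc (X : QBFS μ) (t : ℝ≥0∞) : ℝ≥0∞ :=
  ⨅ E ∈ {E : Set α | MeasurableSet E ∧ μ E = t}, assocN X (E.indicator 1)

/-- Maximal fundamental function of the associate space. -/
def phiMaxAssoc (X : QBFS μ) (t : ℝ≥0∞) : ℝ≥0∞ :=
  ⨆ E ∈ {E : Set α | MeasurableSet E ∧ μ E = t}, assocN X (E.indicator 1)

/-- The simple averaging operator `A_E f = (μ(E)⁻¹ ∫_E f dμ) χ_E`. -/
def avgOp (μ : Measure α) (E : Set α) (f : α → ℝ≥0∞) : α → ℝ≥0∞ :=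
  E.indicator fun _ => (μ E)⁻¹ * ∫⁻ x in E, f x ∂μ

/-- The family of simple averaging operators is uniformly bounded on `X`
with constant `c`. -/
def UnifBoundedAvg (X : QBFS μ) (c : ℝ≥0∞) : Prop :=
  ∀ E : Set α, MeasurableSet E → 0 < μ E → μ E < ∞ →
    ∀ f : α → ℝ≥0∞, X.N f ≤ 1 → X.N (avgOp μ E f) ≤ c

/-- The quantity `sup_{‖f‖_X≤1} inf_{μ(E)≤a} ‖f χ_{R∖E}‖_Y`. -/
def acInftyFun (X Y : QBFS μ) (a : ℝ) : ℝ≥0∞ :=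
  ⨆ f ∈ {f : α → ℝ≥0∞ | X.N f ≤ 1},
    ⨅ E ∈ {E : Set α | MeasurableSet E ∧ μ E ≤ ENNReal.ofReal a}, Y.N (Eᶜ.indicator f)

/-- The relation `X ⊂∞ Y`: uniform decay of norms at infinity. -/
def AcInfty (X Y : QBFS μ) : Prop := Tendsto (acInftyFun X Y) atTop (𝓝 0)

/-- The quantity `sup_{‖f‖_X≤1} sup_{μ(E)≤a} ‖f χ_E‖_Y`. -/
def acLocFun (X Y : QBFS μ) (a : ℝ) : ℝ≥0∞ :=
  ⨆ f ∈ {f : α → ℝ≥0∞ | X.N f ≤ 1},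
    ⨆ E ∈ {E : Set α | MeasurableSet E ∧ μ E ≤ ENNReal.ofReal a}, Y.N (E.indicator f)

/-- The relation `X ⊂loc Y`: localized almost-compact embedding. -/
def AcLoc (X Y : QBFS μ) : Prop := Tendsto (acLocFun X Y) (𝓝[>] (0 : ℝ)) (𝓝 0)

/-- The weak relation `X ⊏∞ Y`. -/
def WeakAcInfty (X Y : QBFS μ) : Prop := ∃ a : ℝ, 0 < a ∧ acInftyFun X Y a < ∞

/-- Rearrangement invariance (P6): the norm only depends on the
distribution function. -/
def RearrInv (X : QBFS μ) : Prop :=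
  ∀ f g : α → ℝ≥0∞, (∀ lam : ℝ≥0∞, μ {x | lam < f x} = μ {x | lam < g x}) → X.N f = X.N g

/-- The nonincreasing rearrangement `f*`, as a function on `ℝ`
(only its values on `(0,∞)` are relevant). -/
def rearr (μ : Measure α) (f : α → ℝ≥0∞) (t : ℝ) : ℝ≥0∞ :=
  sInf {lam : ℝ≥0∞ | μ {x | lam < f x} ≤ ENNReal.ofReal t}

/-- Lebesgue measure restricted to `(0,∞)`. -/
def lebOn : Measure ℝ := volume.restrict (Ioi 0)

/-- `Xb` is the representation space of `X`: a rearrangement-invariant space over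
`(0,∞)` with `‖f‖_X = ‖f*‖_{X̄}`. -/
def IsRepSpace (X : QBFS μ) (Xb : QBFS lebOn) : Prop :=
  RearrInv Xb ∧ ∀ f : α → ℝ≥0∞, X.N f = Xb.N (rearr μ f)

/-- The Lorentz functional `‖f‖_{L^{p,q}}`. -/
def lorentzNorm (μ : Measure α) (p q : ℝ≥0∞) (f : α → ℝ≥0∞) : ℝ≥0∞ :=
  if q = ∞ then ⨆ t ∈ Ioi (0 : ℝ), ENNReal.ofReal (t ^ p.toReal⁻¹) * rearr μ f t
  else (∫⁻ t in Ioi (0 : ℝ),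
      (ENNReal.ofReal (t ^ (p.toReal⁻¹ - q.toReal⁻¹)) * rearr μ f t) ^ q.toReal) ^ q.toReal⁻¹

/-- A Young function: left-continuous, convex, vanishing at `0`, not identically
constant on `(0,∞)`. -/
structure YoungFunction where
  toFun : ℝ≥0∞ → ℝ≥0∞
  map_zero : toFun 0 = 0
  mono : Monotone toFun
  convex : ∀ (x y : ℝ≥0∞) (t : ℝ≥0), t ≤ 1 →
    toFun ((t : ℝ≥0∞) * x + ((1 - t : ℝ≥0) : ℝ≥0∞) * y) ≤
      (t : ℝ≥0∞) * toFun x + ((1 - t : ℝ≥0) : ℝ≥0∞) * toFun y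
  leftCont : ∀ x : ℝ≥0∞, x ≠ 0 → toFun x = ⨆ y ∈ Iio x, toFun y
  nontrivial : ∃ a b : ℝ≥0∞, 0 < a ∧ a ≠ ∞ ∧ 0 < b ∧ b ≠ ∞ ∧ toFun a ≠ toFun b

/-- The Orlicz (Luxemburg) norm associated with a Young function `A`. -/
def orliczNorm (μ : Measure α) (A : ℝ≥0∞ → ℝ≥0∞) (f : α → ℝ≥0∞) : ℝ≥0∞ :=
  sInf {lam : ℝ≥0∞ | lam ≠ 0 ∧ (∫⁻ x, A (f x / lam) ∂μ) ≤ 1}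

/-- The Lorentz endpoint norm `‖f‖_{Λ_φ} = ‖f‖_∞ φ(0+) + ∫_0^∞ f*(t) φ'(t) dt`. -/
def lambdaNorm (μ : Measure α) (φ : ℝ → ℝ) (f : α → ℝ≥0∞) : ℝ≥0∞ :=
  essSup f μ * ENNReal.ofReal (Function.rightLim φ 0) +
    ∫⁻ t in Ioi (0 : ℝ), rearr μ f t * ENNReal.ofReal (deriv φ t)

/-
If `‖f‖_X ≤ 1` and `μ(E) = t`, then `A_E f = (t⁻¹ ∫_E f) χ_E`, so uniform boundedness gives
`(∫_E f) ‖χ_E‖_X ≤ C t`; no finiteness of `∫_E f` is needed, because `a ‖g‖_X ≤ ‖a g‖_X`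
persists at `a = ∞` by monotonicity. Taking the supremum over `f` yields
`‖χ_E‖_X ‖χ_E‖_{X'} ≤ C t` for every set of measure `t`, and both products in the maximum are
bounded by such a product.
-/

namespace QBFS

theorem mul_N_le_N_mul (X : QBFS μ) (a : ℝ≥0∞) (g : α → ℝ≥0∞) :
    a * X.N g ≤ X.N (fun x => a * g x) := by
  rcases eq_or_ne a ∞ with rfl | ha
  · calc ∞ * X.N g = ⨆ n : ℕ, (n : ℝ≥0∞) * X.N g := by
          rw [← ENNReal.iSup_mul, ENNReal.iSup_natCast]
      _ ≤ X.N (fun x => ∞ * g x) := iSup_le fun n => by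
          rw [← X.smul _ _ (ENNReal.natCast_ne_top n)]
          exact X.mono _ _ (Eventually.of_forall fun x => by gcongr; exact le_top)
  · exact (X.smul a g ha).ge

end QBFS

theorem lintegral_mul_indicator_one (f : α → ℝ≥0∞) {E : Set α} (hE : MeasurableSet E) :
    ∫⁻ x, f x * E.indicator 1 x ∂μ = ∫⁻ x in E, f x ∂μ := by
  rw [← lintegral_indicator hE]
  congr 1 with x
  by_cases hx : x ∈ E <;> simp [hx]

theorem avgOp_eq_smul_indicator_one (μ : Measure α) (E : Set α) (f : α → ℝ≥0∞) :
    avgOp μ E f = fun x => ((μ E)⁻¹ * ∫⁻ y in E, f y ∂μ) * E.indicator 1 x := by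
  ext x
  by_cases hx : x ∈ E <;> simp [avgOp, hx]

theorem UnifBoundedAvg.setLIntegral_mul_chi_le {X : QBFS μ} {c : ℝ≥0∞}
    (havg : UnifBoundedAvg X c) {E : Set α} (hE : MeasurableSet E) (hE₀ : 0 < μ E)
    (hE_top : μ E < ∞) {f : α → ℝ≥0∞} (hf : X.N f ≤ 1) :
    (∫⁻ x in E, f x ∂μ) * X.chi E ≤ c * μ E := by
  set I := ∫⁻ x in E, f x ∂μ
  calc I * X.chi E = μ E * ((μ E)⁻¹ * I * X.chi E) := by
        rw [← mul_assoc, ← mul_assoc, ENNReal.mul_inv_cancel hE₀.ne' hE_top.ne, one_mul]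
    _ ≤ μ E * X.N (avgOp μ E f) := by
        rw [avgOp_eq_smul_indicator_one]
        gcongr
        exact X.mul_N_le_N_mul _ _
    _ ≤ μ E * c := by gcongr; exact havg E hE hE₀ hE_top f hf
    _ = c * μ E := mul_comm _ _

theorem UnifBoundedAvg.chi_mul_assocN_le {X : QBFS μ} {c : ℝ≥0∞}
    (havg : UnifBoundedAvg X c) {E : Set α} (hE : MeasurableSet E) (hE₀ : 0 < μ E)
    (hE_top : μ E < ∞) :
    X.chi E * assocN X (E.indicator 1) ≤ c * μ E := by
  simp only [assocN, ENNReal.mul_iSup]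
  refine iSup₂_le fun f hf => ?_
  rw [lintegral_mul_indicator_one f hE, mul_comm]
  exact havg.setLIntegral_mul_chi_le hE hE₀ hE_top hf

theorem statement2_general
    (X : QBFS μ) (c : ℝ≥0∞) (havg : UnifBoundedAvg X c) :
    ∀ t : ℝ≥0∞, 0 < t → t ≠ ∞ →
      max (phiMin X t * phiMaxAssoc X t) (phiMax X t * phiMinAssoc X t) ≤ c * t := by
  intro t ht ht_top
  have chi_mul_assocN : ∀ E ∈ {E : Set α | MeasurableSet E ∧ μ E = t},
      X.chi E * assocN X (E.indicator 1) ≤ c * t := by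
    rintro E ⟨hE, rfl⟩
    exact havg.chi_mul_assocN_le hE ht ht_top.lt_top
  refine max_le ?_ ?_
  · simp only [phiMaxAssoc, ENNReal.mul_iSup]
    exact iSup₂_le fun E hE =>
      (mul_le_mul_left (iInf₂_le E hE) _).trans (chi_mul_assocN E hE)
  · simp only [phiMax, ENNReal.iSup_mul]
    exact iSup₂_le fun E hE =>
      (mul_le_mul_right (iInf₂_le E hE) _).trans (chi_mul_assocN E hE)

/-- if the simple averaging operators are uniformly bounded on `X` with
constant `c`, then `max{φ*_X(t) φ^★_{X'}(t), φ^★_X(t) φ*_{X'}(t)} ≤ c t`. -/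
theorem statement2 [SigmaFinite μ] [NullSingletonClass μ] (hμ : μ Set.univ = ∞)
    (X : QBFS μ) (hX : P5 X) (c : ℝ≥0∞) (hc : c ≠ ∞) (havg : UnifBoundedAvg X c) :
    ∀ t : ℝ≥0∞, 0 < t → t ≠ ∞ →
      max (phiMin X t * phiMaxAssoc X t) (phiMax X t * phiMinAssoc X t) ≤ c * t :=
  statement2_general X c havg
end
end

section
/- Let X and Y be quasi-Banach function spaces over a σ-finite nonatomic measure space with μ(R)=∞. If X ⊂loc Y (i.e., lim_{a→0+} sup_{‖f‖_X≤1} sup_{μ(E)≤a} ‖f χ_E‖_Y = 0), then lim_{a→0+} φ^★_Y(a)/φ^★_X(a) = 0, and in particular lim_{a→0+} φ^★_Y(a) = 0. -/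
open MeasureTheory Filter Set Topology
open scoped ENNReal NNReal

noncomputable section

variable {α : Type*} [MeasurableSpace α]

variable {μ : Measure α}

/-!
Testing `X ⊂loc Y` on the normalised indicator `χ_E / ‖χ_E‖_X` gives
`‖χ_E‖_Y ≤ acLocFun X Y s · ‖χ_E‖_X` whenever `μ(E) ≤ s`; taking suprema over `μ(E) = a` bounds the
ratio of fundamental functions. For `φ^★_Y → 0`, if sets `E_n` with `μ(E_n) < 2⁻ⁿ` had `‖χ_{E_n}‖_Y > ε`,
they would all lie in `F = ⋃ E_n` of finite measure, so `‖χ_{E_n}‖_X ≤ ‖χ_F‖_X < ∞` and the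
same bound forces `‖χ_{E_n}‖_Y → 0`.
-/

namespace QBFS

variable (X : QBFS μ) {E F : Set α}

lemma chi_eq_zero_iff : X.chi E = 0 ↔ μ E = 0 := by
  rw [chi, X.eq_zero_iff, indicator_ae_eq_zero, Function.support_one, inter_univ]

lemma chi_mono (h : E ⊆ F) : X.chi E ≤ X.chi F :=
  X.mono _ _ (Eventually.of_forall (indicator_le_indicator_of_subset h fun _ => zero_le))

lemma exists_chi_gt_of_lt_phiMax {ε t : ℝ≥0∞} (h : ε < phiMax X t) :
    ∃ E, MeasurableSet E ∧ μ E = t ∧ ε < X.chi E := by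
  simpa only [phiMax, lt_iSup_iff, exists_prop, and_assoc, mem_ofPred_eq] using h

end QBFS

section AcLoc

variable (X Y : QBFS μ)

lemma le_acLocFun {s : ℝ} {f : α → ℝ≥0∞} (hf : X.N f ≤ 1) {E : Set α} (hE : MeasurableSet E)
    (hEs : μ E ≤ ENNReal.ofReal s) : Y.N (E.indicator f) ≤ acLocFun X Y s :=
  le_iSup₂_of_le f hf (le_iSup₂_of_le (α := ℝ≥0∞) E ⟨hE, hEs⟩ le_rfl)

lemma chi_le_acLocFun_mul_chi (s : ℝ) {E : Set α} (hE : MeasurableSet E)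
    (hEs : μ E ≤ ENNReal.ofReal s) : Y.chi E ≤ acLocFun X Y s * X.chi E := by
  set c := X.chi E
  rcases eq_or_ne c 0 with hc0 | hc0
  · rw [Y.chi_eq_zero_iff.mpr (X.chi_eq_zero_iff.mp hc0)]
    exact zero_le
  have hc : c ≠ ∞ := (X.chi_lt_top E (hEs.trans_lt ENNReal.ofReal_lt_top)).ne
  have hcinv : c⁻¹ ≠ ∞ := ENNReal.inv_ne_top.mpr hc0
  let f : α → ℝ≥0∞ := fun x => c⁻¹ * E.indicator 1 x
  have hf : X.N f = 1 := by
    rw [X.smul _ _ hcinv]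
    exact ENNReal.inv_mul_cancel hc0 hc
  have hfE : E.indicator f = f := by
    funext x
    by_cases hx : x ∈ E <;> simp [f, hx]
  have key := le_acLocFun X Y hf.le hE hEs
  rw [hfE, Y.smul _ _ hcinv, ENNReal.inv_mul_le_iff hc0 hc] at key
  exact key.trans_eq (mul_comm _ _)

lemma phiMax_div_phiMax_le_acLocFun (s : ℝ) {a : ℝ≥0∞} (ha : a ≤ ENNReal.ofReal s) :
    phiMax Y a / phiMax X a ≤ acLocFun X Y s := by
  refine ENNReal.div_le_of_le_mul (iSup₂_le fun E ⟨hEm, hEa⟩ => ?_)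
  exact (chi_le_acLocFun_mul_chi X Y s hEm (hEa ▸ ha)).trans
    (mul_le_mul_right (le_iSup₂_of_le (α := ℝ≥0∞) E ⟨hEm, hEa⟩ le_rfl) _)

variable {X Y}

theorem tendsto_phiMax_div_phiMax_of_acLoc (h : AcLoc X Y) :
    Tendsto (fun a => phiMax Y a / phiMax X a) (𝓝[>] 0) (𝓝 0) := by
  refine ENNReal.tendsto_nhds_zero.mpr fun ε hε => ?_
  obtain ⟨s, hs, hs0⟩ := ((ENNReal.tendsto_nhds_zero.mp h ε hε).and self_mem_nhdsWithin).exists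
  filter_upwards [Ioo_mem_nhdsGT (ENNReal.ofReal_pos.mpr hs0)] with a ha
  exact (phiMax_div_phiMax_le_acLocFun X Y s ha.2.le).trans hs

theorem tendsto_chi_of_acLoc (h : AcLoc X Y) {ι : Type*} {l : Filter ι} {E : ι → Set α}
    {F : Set α} (hEm : ∀ i, MeasurableSet (E i)) (hEF : ∀ i, E i ⊆ F) (hF : μ F < ∞)
    (hE : Tendsto (fun i => μ (E i)) l (𝓝 0)) :
    Tendsto (fun i => Y.chi (E i)) l (𝓝 0) := by
  have hK : Tendsto (fun s => acLocFun X Y s * X.chi F) (𝓝[>] 0) (𝓝 0) := by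
    simpa only [zero_mul] using
      ENNReal.Tendsto.mul_const h (b := X.chi F) (Or.inr (X.chi_lt_top F hF).ne)
  refine ENNReal.tendsto_nhds_zero.mpr fun ε hε => ?_
  obtain ⟨s, hs, hs0⟩ := ((ENNReal.tendsto_nhds_zero.mp hK ε hε).and self_mem_nhdsWithin).exists
  filter_upwards [hE.eventually_lt_const (ENNReal.ofReal_pos.mpr hs0)] with i hi
  calc Y.chi (E i) ≤ acLocFun X Y s * X.chi (E i) :=
        chi_le_acLocFun_mul_chi X Y s (hEm i) hi.le
    _ ≤ acLocFun X Y s * X.chi F := mul_le_mul_right (X.chi_mono (hEF i)) _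
    _ ≤ ε := hs

theorem tendsto_phiMax_of_acLoc (h : AcLoc X Y) : Tendsto (phiMax Y) (𝓝[>] 0) (𝓝 0) := by
  refine ENNReal.tendsto_nhds_zero.mpr fun ε hε => ?_
  by_contra hfreq
  have hsmall (n : ℕ) : ∃ E, MeasurableSet E ∧ μ E < (2⁻¹ : ℝ≥0∞) ^ n ∧ ε < Y.chi E := by
    have hn : (0 : ℝ≥0∞) < 2⁻¹ ^ n := ENNReal.pow_pos (ENNReal.inv_pos.mpr ENNReal.ofNat_ne_top) n
    obtain ⟨a, ha, -, han⟩ :=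
      ((not_eventually.mp hfreq).and_eventually (Ioo_mem_nhdsGT hn)).exists
    obtain ⟨E, hEm, rfl, hE⟩ := Y.exists_chi_gt_of_lt_phiMax (not_le.mp ha)
    exact ⟨E, hEm, han, hE⟩
  choose E hEm hEμ hEY using hsmall
  have hF : μ (⋃ n, E n) < ∞ :=
    calc μ (⋃ n, E n) ≤ ∑' n, μ (E n) := measure_iUnion_le E
      _ ≤ ∑' n : ℕ, (2⁻¹ : ℝ≥0∞) ^ n := ENNReal.tsum_le_tsum fun n => (hEμ n).le
      _ = 2 := by rw [ENNReal.tsum_geometric, ENNReal.one_sub_inv_two, inv_inv]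
      _ < ∞ := ENNReal.ofNat_lt_top
  have hμE : Tendsto (fun n => μ (E n)) atTop (𝓝 0) :=
    tendsto_of_tendsto_of_tendsto_of_le_of_le tendsto_const_nhds
      (ENNReal.tendsto_pow_atTop_nhds_zero_of_lt_one (ENNReal.inv_lt_one.mpr ENNReal.one_lt_two))
      (fun _ => zero_le) (fun n => (hEμ n).le)
  obtain ⟨n, hn⟩ :=
    ((tendsto_chi_of_acLoc h hEm (subset_iUnion E) hF hμE).eventually_lt_const hε).exists
  exact (hEY n).not_gt hn

end AcLoc

theorem statement5_general (X Y : QBFS μ) (h : AcLoc X Y) :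
    Tendsto (fun a : ℝ≥0∞ => phiMax Y a / phiMax X a) (𝓝[>] (0 : ℝ≥0∞)) (𝓝 0) ∧
      Tendsto (fun a : ℝ≥0∞ => phiMax Y a) (𝓝[>] (0 : ℝ≥0∞)) (𝓝 0) :=
  ⟨tendsto_phiMax_div_phiMax_of_acLoc h, tendsto_phiMax_of_acLoc h⟩

/-- if `X ⊂loc Y`, then `φ^★_Y(a)/φ^★_X(a) → 0` and `φ^★_Y(a) → 0`
as `a → 0+`. -/
theorem statement5 [SigmaFinite μ] [NullSingletonClass μ] (hμ : μ Set.univ = ∞)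
    (X Y : QBFS μ) (h : AcLoc X Y) :
    Tendsto (fun a : ℝ≥0∞ => phiMax Y a / phiMax X a) (𝓝[>] (0 : ℝ≥0∞)) (𝓝 0) ∧
      Tendsto (fun a : ℝ≥0∞ => phiMax Y a) (𝓝[>] (0 : ℝ≥0∞)) (𝓝 0) :=
  statement5_general X Y h
end
end

section
/- For Lorentz spaces over a σ-finite nonatomic measure space with μ(R)=∞: given p₁,p₂,q₁,q₂ ∈ (0,∞] with p_j < ∞ or p_j=q_j=∞ for j=1,2, the relation L^{p₁,q₁} ⊂∞ L^{p₂,q₂} holds if and only if p₁ < p₂. -/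
open MeasureTheory Filter Set Topology
open scoped ENNReal NNReal

noncomputable section

variable {α : Type*} [MeasurableSpace α]

variable {μ : Measure α}

/-!
If `‖f‖_{L^{p₁,q₁}} ≤ 1` then `f*(t) ≤ c t^{-1/p₁}`. Cutting `f` at the height `f*(a)` removes a
set of measure `≤ a` and leaves a function `g` with `g*(t) ≤ c min(t, a)^{-1/p₁}`, whose
`L^{p₂,q₂}` norm is `O(a^{1/p₂ - 1/p₁})`; this tends to `0` exactly when `p₁ < p₂`.

Conversely, if `p₂ ≤ p₁`, take a set `F` of finite measure `m ≥ max(2a, 1)` (σ-finiteness and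
`μ(R) = ∞`) and `f = χ_F / ‖χ_F‖_{L^{p₁,q₁}}`. Removing a set of measure `≤ a` keeps at least
half of `F`, so what is left has `L^{p₂,q₂}` norm `≳ (m/2)^{1/p₂} / m^{1/p₁} ≳ 1`.
-/

lemma rearr_antitone (f : α → ℝ≥0∞) : Antitone (rearr μ f) := fun _ _ hst =>
  sInf_le_sInf fun _ hlam => hlam.trans (ENNReal.ofReal_le_ofReal hst)

lemma rearr_mono {f g : α → ℝ≥0∞} (h : ∀ x, f x ≤ g x) (t : ℝ) :
    rearr μ f t ≤ rearr μ g t :=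
  sInf_le_sInf fun _ hlam => (measure_mono fun _ hx => lt_of_lt_of_le hx (h _)).trans hlam

lemma rearr_le_of_forall_le {f : α → ℝ≥0∞} {c : ℝ≥0∞} (h : ∀ x, f x ≤ c) (t : ℝ) :
    rearr μ f t ≤ c := by
  refine sInf_le ?_
  simp [(h _).not_gt]

lemma measure_lt_rearr_le (f : α → ℝ≥0∞) (t : ℝ) :
    μ {x | rearr μ f t < f x} ≤ ENNReal.ofReal t := by
  obtain ⟨u, hu_anti, hu_lim, hu_mem⟩ :=
    exists_seq_tendsto_sInf (S := {lam : ℝ≥0∞ | μ {x | lam < f x} ≤ ENNReal.ofReal t})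
      ⟨∞, by simp⟩ (OrderBot.bddBelow _)
  have hunion : {x | rearr μ f t < f x} = ⋃ n, {x | u n < f x} := by
    ext x
    simp only [mem_ofPred_eq, mem_iUnion]
    refine ⟨fun hx => (hu_lim.eventually (gt_mem_nhds hx)).exists, fun ⟨n, hn⟩ => ?_⟩
    exact lt_of_le_of_lt (sInf_le (hu_mem n)) hn
  have hmono : Monotone fun n => {x | u n < f x} := fun _ _ hnm _ hx =>
    lt_of_le_of_lt (hu_anti hnm) hx
  rw [hunion, hmono.measure_iUnion]
  exact iSup_le hu_mem

lemma rearr_indicator_one (F : Set α) (t : ℝ) :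
    rearr μ (F.indicator 1) t = if ENNReal.ofReal t < μ F then 1 else 0 := by
  have hlevel : ∀ lam : ℝ≥0∞, {x | lam < F.indicator 1 x} = if lam < 1 then F else ∅ := by
    intro lam
    ext x
    by_cases hx : x ∈ F <;> split_ifs with h <;> simp [hx, h]
  split_ifs with h
  · have : {lam : ℝ≥0∞ | μ {x | lam < F.indicator 1 x} ≤ ENNReal.ofReal t} = Ici 1 := by
      ext lam
      simp only [mem_ofPred_eq, hlevel, mem_Ici]
      split_ifs with h1
      · simp [h.not_ge, h1.not_ge]
      · simpa using not_lt.1 h1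
    rw [rearr, this, csInf_Ici]
  · have : {lam : ℝ≥0∞ | μ {x | lam < F.indicator 1 x} ≤ ENNReal.ofReal t} = univ := by
      ext lam
      simp only [mem_ofPred_eq, hlevel, mem_univ, iff_true]
      split_ifs <;> simp [not_lt.1 h]
    rw [rearr, this, sInf_univ]
    rfl

lemma exists_measure_le_indicator_compl_le_rearr (f : α → ℝ≥0∞) (t : ℝ) :
    ∃ E, MeasurableSet E ∧ μ E ≤ ENNReal.ofReal t ∧ ∀ x, Eᶜ.indicator f x ≤ rearr μ f t := by
  refine ⟨toMeasurable μ {x | rearr μ f t < f x}, measurableSet_toMeasurable _ _,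
    (measure_toMeasurable _).trans_le (measure_lt_rearr_le f t), fun x => ?_⟩
  by_cases hx : x ∈ (toMeasurable μ {x | rearr μ f t < f x})ᶜ
  · rw [indicator_of_mem hx]
    exact not_lt.1 fun hlt => hx (subset_toMeasurable _ _ hlt)
  · simp [indicator_of_notMem hx]

lemma setLIntegral_Ioc_rpow_sub_one {r b : ℝ} (hr : 0 < r) (hb : 0 < b) :
    ∫⁻ t in Ioc 0 b, ENNReal.ofReal (t ^ (r - 1)) = ENNReal.ofReal (b ^ r / r) := by
  have hint : IntegrableOn (fun t : ℝ => t ^ (r - 1)) (Ioc 0 b) := by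
    rw [← intervalIntegrable_iff_integrableOn_Ioc_of_le hb.le]
    exact intervalIntegral.intervalIntegrable_rpow' (by linarith)
  rw [← ofReal_integral_eq_lintegral_ofReal hint, ← intervalIntegral.integral_of_le hb.le,
    integral_rpow (Or.inl (by linarith)), sub_add_cancel, Real.zero_rpow hr.ne', sub_zero]
  filter_upwards [ae_restrict_mem measurableSet_Ioc] with t ht
  exact Real.rpow_nonneg ht.1.le _

lemma setLIntegral_Ioi_rpow_sub_one {r b : ℝ} (hr : r < 0) (hb : 0 < b) :
    ∫⁻ t in Ioi b, ENNReal.ofReal (t ^ (r - 1)) = ENNReal.ofReal (b ^ r / (-r)) := by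
  rw [← ofReal_integral_eq_lintegral_ofReal (integrableOn_Ioi_rpow_of_lt (by linarith) hb),
    integral_Ioi_rpow_of_lt (by linarith) hb, sub_add_cancel, neg_div, div_neg]
  filter_upwards [ae_restrict_mem measurableSet_Ioi] with t ht
  exact Real.rpow_nonneg (hb.trans ht).le _

lemma setLIntegral_Ioi_zero_eq_add (g : ℝ → ℝ≥0∞) {b : ℝ} (hb : 0 ≤ b) :
    ∫⁻ t in Ioi 0, g t = (∫⁻ t in Ioc 0 b, g t) + ∫⁻ t in Ioi b, g t := by
  rw [← lintegral_union measurableSet_Ioi Ioc_disjoint_Ioi_same, Ioc_union_Ioi_eq_Ioi hb]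

/-- `‖χ_F‖_{L^{p,q}} = lorentzConst p q * μ(F)^{1/p}`: for `q < ∞` the constant comes from
`∫₀^m t^{q/p-1} dt = (p/q) m^{q/p}`. -/
def lorentzConst (p q : ℝ≥0∞) : ℝ≥0∞ :=
  if q = ∞ then 1 else ENNReal.ofReal ((p.toReal / q.toReal) ^ q.toReal⁻¹)

lemma lorentzConst_top (p : ℝ≥0∞) : lorentzConst p ∞ = 1 := if_pos rfl

lemma lorentzConst_pos {p q : ℝ≥0∞} (hp0 : 0 < p) (hq0 : 0 < q)
    (hpq : p ≠ ∞ ∨ (p = ∞ ∧ q = ∞)) : 0 < lorentzConst p q := by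
  rcases eq_or_ne q ∞ with hq | hq
  · simp [hq, lorentzConst_top]
  have hp : p ≠ ∞ := hpq.resolve_right fun h => hq h.2
  rw [lorentzConst, if_neg hq]
  exact ENNReal.ofReal_pos.2 (Real.rpow_pos_of_pos
    (div_pos (ENNReal.toReal_pos hp0.ne' hp) (ENNReal.toReal_pos hq0.ne' hq)) _)

lemma lorentzConst_ne_top (p q : ℝ≥0∞) : lorentzConst p q ≠ ∞ := by
  unfold lorentzConst; split_ifs <;> simp

lemma setLIntegral_Ioc_lorentz_const {p q : ℝ≥0∞} (hp0 : 0 < p) (hp : p ≠ ∞) (hq0 : 0 < q)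
    (hq : q ≠ ∞) {b : ℝ} (hb : 0 < b) (c : ℝ≥0∞) :
    ∫⁻ t in Ioc 0 b, (ENNReal.ofReal (t ^ (p.toReal⁻¹ - q.toReal⁻¹)) * c) ^ q.toReal
      = (lorentzConst p q * ENNReal.ofReal b ^ p.toReal⁻¹ * c) ^ q.toReal := by
  have hP : 0 < p.toReal := ENNReal.toReal_pos hp0.ne' hp
  have hQ : 0 < q.toReal := ENNReal.toReal_pos hq0.ne' hq
  have hintegrand : EqOn
      (fun t => (ENNReal.ofReal (t ^ (p.toReal⁻¹ - q.toReal⁻¹)) * c) ^ q.toReal)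
      (fun t => c ^ q.toReal * ENNReal.ofReal (t ^ (q.toReal / p.toReal - 1))) (Ioc 0 b) := by
    intro t ht
    dsimp only
    rw [ENNReal.mul_rpow_of_nonneg _ _ hQ.le, ← ENNReal.ofReal_rpow_of_pos ht.1,
      ← ENNReal.ofReal_rpow_of_pos ht.1, ← ENNReal.rpow_mul, mul_comm]
    congr 2
    field_simp
  rw [setLIntegral_congr_fun measurableSet_Ioc hintegrand,
    lintegral_const_mul _ (by fun_prop), setLIntegral_Ioc_rpow_sub_one (div_pos hQ hP) hb,
    lorentzConst, if_neg hq, ENNReal.mul_rpow_of_nonneg _ _ hQ.le,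
    ENNReal.mul_rpow_of_nonneg _ _ hQ.le, ENNReal.ofReal_rpow_of_pos (by positivity),
    ← Real.rpow_mul (by positivity), inv_mul_cancel₀ hQ.ne', Real.rpow_one,
    ← ENNReal.rpow_mul, ENNReal.ofReal_rpow_of_pos hb, ← ENNReal.ofReal_mul (by positivity),
    mul_comm (c ^ _), inv_mul_eq_div]
  congr 2
  field_simp

lemma lorentzNorm_top_indicator (p : ℝ≥0∞) {F : Set α} (hF : μ F ≠ 0) :
    lorentzNorm μ p ∞ (F.indicator 1) = μ F ^ p.toReal⁻¹ := by
  rw [lorentzNorm, if_pos rfl]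
  apply le_antisymm
  · refine iSup₂_le fun t ht => ?_
    rw [rearr_indicator_one, ← ENNReal.ofReal_rpow_of_pos ht]
    split_ifs with h
    · rw [mul_one]
      exact ENNReal.rpow_le_rpow h.le (by positivity)
    · simp
  · refine le_of_forall_lt fun w hw => ?_
    -- `x ↦ x ^ (1/p)` is continuous, so `w < x ^ (1/p)` for all `x` in some `(l, μ F]`
    obtain ⟨l, hl, hlF⟩ := exists_Ioc_subset_of_mem_nhds
      ((ENNReal.continuous_rpow_const.tendsto (μ F)).eventually (lt_mem_nhds hw))
      ⟨0, pos_iff_ne_zero.2 hF⟩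
    obtain ⟨t, -, hlt, htF⟩ := ENNReal.lt_iff_exists_real_btwn.1 hl
    have ht : 0 < t := ENNReal.ofReal_pos.1 (zero_le.trans_lt hlt)
    refine lt_of_lt_of_le ?_ (le_biSup _ (show t ∈ Ioi 0 from ht))
    rw [rearr_indicator_one, if_pos htF, mul_one, ← ENNReal.ofReal_rpow_of_pos ht]
    exact hlF ⟨hlt, htF.le⟩

/-- For `p = ∞` the exponent is `0` (as `(∞ : ℝ≥0∞).toReal = 0`), so this covers `L^∞` too. -/
lemma lorentzNorm_indicator {p q : ℝ≥0∞} (hp0 : 0 < p) (hq0 : 0 < q)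
    (hpq : p ≠ ∞ ∨ (p = ∞ ∧ q = ∞)) {F : Set α} (hF0 : μ F ≠ 0) (hF : μ F ≠ ∞) :
    lorentzNorm μ p q (F.indicator 1) = lorentzConst p q * μ F ^ p.toReal⁻¹ := by
  rcases eq_or_ne q ∞ with rfl | hq
  · rw [lorentzConst_top, one_mul, lorentzNorm_top_indicator p hF0]
  have hp : p ≠ ∞ := hpq.resolve_right fun h => hq h.2
  have hQ : 0 < q.toReal := ENNReal.toReal_pos hq0.ne' hq
  have hb : 0 < (μ F).toReal := ENNReal.toReal_pos hF0 hF
  have hbF : ENNReal.ofReal (μ F).toReal = μ F := ENNReal.ofReal_toReal hF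
  have hbelow : EqOn
      (fun t => (ENNReal.ofReal (t ^ (p.toReal⁻¹ - q.toReal⁻¹)) * rearr μ (F.indicator 1) t)
        ^ q.toReal)
      (fun t => (ENNReal.ofReal (t ^ (p.toReal⁻¹ - q.toReal⁻¹)) * 1) ^ q.toReal)
      (Ioo 0 (μ F).toReal) := by
    intro t ht
    dsimp only
    rw [rearr_indicator_one,
      if_pos (by rw [← hbF]; exact ENNReal.ofReal_lt_ofReal_iff'.2 ⟨ht.2, hb⟩)]
  have habove : EqOn
      (fun t => (ENNReal.ofReal (t ^ (p.toReal⁻¹ - q.toReal⁻¹)) * rearr μ (F.indicator 1) t)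
        ^ q.toReal) (fun _ => 0) (Ioi (μ F).toReal) := by
    intro t ht
    dsimp only
    rw [rearr_indicator_one,
      if_neg (by rw [← hbF]; exact not_lt.2 (ENNReal.ofReal_le_ofReal ht.le)),
      mul_zero, ENNReal.zero_rpow_of_pos hQ]
  rw [lorentzNorm, if_neg hq, setLIntegral_Ioi_zero_eq_add _ hb.le,
    setLIntegral_congr_fun measurableSet_Ioi habove, ← setLIntegral_congr Ioo_ae_eq_Ioc,
    setLIntegral_congr_fun measurableSet_Ioo hbelow, setLIntegral_congr Ioo_ae_eq_Ioc,
    setLIntegral_Ioc_lorentz_const hp0 hp hq0 hq hb, lintegral_zero, add_zero,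
    ENNReal.rpow_rpow_inv hQ.ne', mul_one, hbF]

lemma lorentzConst_mul_rpow_mul_rearr_le {p q : ℝ≥0∞} (hp0 : 0 < p) (hq0 : 0 < q)
    (hpq : p ≠ ∞ ∨ (p = ∞ ∧ q = ∞)) (f : α → ℝ≥0∞) {t : ℝ} (ht : 0 < t) :
    lorentzConst p q * ENNReal.ofReal t ^ p.toReal⁻¹ * rearr μ f t ≤ lorentzNorm μ p q f := by
  rcases eq_or_ne q ∞ with rfl | hq
  · rw [lorentzConst_top, one_mul, lorentzNorm, if_pos rfl, ENNReal.ofReal_rpow_of_pos ht]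
    exact le_biSup (fun s => ENNReal.ofReal (s ^ p.toReal⁻¹) * rearr μ f s) (show t ∈ Ioi 0 from ht)
  have hp : p ≠ ∞ := hpq.resolve_right fun h => hq h.2
  have hQ : 0 < q.toReal := ENNReal.toReal_pos hq0.ne' hq
  rw [lorentzNorm, if_neg hq, ← ENNReal.rpow_rpow_inv hQ.ne' (_ * rearr μ f t),
    ← setLIntegral_Ioc_lorentz_const hp0 hp hq0 hq ht]
  gcongr ?_ ^ _
  calc ∫⁻ s in Ioc 0 t, (ENNReal.ofReal (s ^ (p.toReal⁻¹ - q.toReal⁻¹)) * rearr μ f t) ^ q.toReal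
      ≤ ∫⁻ s in Ioc 0 t, (ENNReal.ofReal (s ^ (p.toReal⁻¹ - q.toReal⁻¹)) * rearr μ f s)
          ^ q.toReal :=
        setLIntegral_mono' measurableSet_Ioc fun s hs => by
          gcongr
          exact rearr_antitone f hs.2
    _ ≤ _ := lintegral_mono_set Ioc_subset_Ioi_self

lemma rearr_le_of_lorentzNorm_le_one {p q : ℝ≥0∞} (hp0 : 0 < p) (hq0 : 0 < q)
    (hpq : p ≠ ∞ ∨ (p = ∞ ∧ q = ∞)) {f : α → ℝ≥0∞} (hf : lorentzNorm μ p q f ≤ 1) {t : ℝ}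
    (ht : 0 < t) :
    rearr μ f t ≤ (lorentzConst p q)⁻¹ * ENNReal.ofReal t ^ (-p.toReal⁻¹) := by
  rw [ENNReal.rpow_neg, ← ENNReal.mul_inv (Or.inl (lorentzConst_pos hp0 hq0 hpq).ne')
    (Or.inl (lorentzConst_ne_top p q)), ENNReal.le_inv_iff_mul_le, mul_comm]
  exact (lorentzConst_mul_rpow_mul_rearr_le hp0 hq0 hpq f ht).trans hf

lemma setLIntegral_Ioi_rpow_mul_rpow_neg {Q r s a : ℝ} (hQ : 0 < Q) (hrs : r < s) (ha : 0 < a)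
    (K : ℝ≥0∞) :
    ∫⁻ t in Ioi a, (ENNReal.ofReal (t ^ (r - Q⁻¹)) * (K * ENNReal.ofReal t ^ (-s))) ^ Q
      = (K * ENNReal.ofReal a ^ (-(s - r))) ^ Q * ENNReal.ofReal (1 / (Q * (s - r))) := by
  have hδ : 0 < Q * (s - r) := mul_pos hQ (sub_pos.2 hrs)
  have hintegrand : EqOn
      (fun t => (ENNReal.ofReal (t ^ (r - Q⁻¹)) * (K * ENNReal.ofReal t ^ (-s))) ^ Q)
      (fun t => K ^ Q * ENNReal.ofReal (t ^ (-(Q * (s - r)) - 1))) (Ioi a) := by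
    intro t ht
    have ht0 : 0 < t := ha.trans ht
    dsimp only
    rw [← ENNReal.ofReal_rpow_of_pos ht0, mul_left_comm, ← ENNReal.rpow_add _ _
      (ENNReal.ofReal_pos.2 ht0).ne' ENNReal.ofReal_ne_top, ENNReal.mul_rpow_of_nonneg _ _ hQ.le,
      ← ENNReal.rpow_mul, ← ENNReal.ofReal_rpow_of_pos ht0]
    congr 2
    field_simp
    ring
  rw [setLIntegral_congr_fun measurableSet_Ioi hintegrand, lintegral_const_mul _ (by fun_prop),
    setLIntegral_Ioi_rpow_sub_one (by linarith) ha, ENNReal.mul_rpow_of_nonneg _ _ hQ.le,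
    mul_assoc, ← ENNReal.rpow_mul, ENNReal.ofReal_rpow_of_pos ha,
    ← ENNReal.ofReal_mul (by positivity), neg_neg]
  congr 3
  field_simp

lemma lorentzNorm_top_le_of_rearr_le {g : α → ℝ≥0∞} (p : ℝ≥0∞) {s a : ℝ} {K : ℝ≥0∞}
    (hs : p.toReal⁻¹ < s) (ha : 0 < a)
    (hg_pow : ∀ t, 0 < t → rearr μ g t ≤ K * ENNReal.ofReal t ^ (-s))
    (hg_const : ∀ t, rearr μ g t ≤ K * ENNReal.ofReal a ^ (-s)) :
    lorentzNorm μ p ∞ g ≤ K * ENNReal.ofReal a ^ (-(s - p.toReal⁻¹)) := by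
  rw [lorentzNorm, if_pos rfl]
  refine iSup₂_le fun t (ht : 0 < t) => ?_
  have hpow : ∀ {u : ℝ}, 0 < u →
      ENNReal.ofReal u ^ p.toReal⁻¹ * (K * ENNReal.ofReal u ^ (-s))
        = K * ENNReal.ofReal u ^ (-(s - p.toReal⁻¹)) := fun hu => by
    rw [mul_left_comm, ← ENNReal.rpow_add _ _ (ENNReal.ofReal_pos.2 hu).ne' ENNReal.ofReal_ne_top,
      show p.toReal⁻¹ + -s = -(s - p.toReal⁻¹) by ring]
  rw [← ENNReal.ofReal_rpow_of_pos ht]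
  rcases le_total t a with hta | hat
  · calc ENNReal.ofReal t ^ p.toReal⁻¹ * rearr μ g t
        ≤ ENNReal.ofReal a ^ p.toReal⁻¹ * (K * ENNReal.ofReal a ^ (-s)) := by
          gcongr
          exact hg_const t
      _ = _ := hpow ha
  · calc ENNReal.ofReal t ^ p.toReal⁻¹ * rearr μ g t
        ≤ ENNReal.ofReal t ^ p.toReal⁻¹ * (K * ENNReal.ofReal t ^ (-s)) := by
          gcongr
          exact hg_pow t ht
      _ = K * ENNReal.ofReal t ^ (-(s - p.toReal⁻¹)) := hpow ht
      _ ≤ _ := by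
          rw [ENNReal.rpow_neg, ENNReal.rpow_neg]
          gcongr

lemma lorentzNorm_le_of_rearr_le {g : α → ℝ≥0∞} {p q : ℝ≥0∞} (hp0 : 0 < p) (hp : p ≠ ∞)
    (hq0 : 0 < q) (hq : q ≠ ∞) {s a : ℝ} {K : ℝ≥0∞} (hs : p.toReal⁻¹ < s) (ha : 0 < a)
    (hg_pow : ∀ t, 0 < t → rearr μ g t ≤ K * ENNReal.ofReal t ^ (-s))
    (hg_const : ∀ t, rearr μ g t ≤ K * ENNReal.ofReal a ^ (-s)) :
    lorentzNorm μ p q g ≤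
      (lorentzConst p q ^ q.toReal + ENNReal.ofReal (1 / (q.toReal * (s - p.toReal⁻¹))))
        ^ q.toReal⁻¹ * (K * ENNReal.ofReal a ^ (-(s - p.toReal⁻¹))) := by
  have hQ : 0 < q.toReal := ENNReal.toReal_pos hq0.ne' hq
  have hA : ENNReal.ofReal a ≠ 0 := (ENNReal.ofReal_pos.2 ha).ne'
  set B := K * ENNReal.ofReal a ^ (-(s - p.toReal⁻¹))
  have hbelow : ∫⁻ t in Ioc 0 a,
      (ENNReal.ofReal (t ^ (p.toReal⁻¹ - q.toReal⁻¹)) * rearr μ g t) ^ q.toReal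
        ≤ lorentzConst p q ^ q.toReal * B ^ q.toReal := by
    calc _ ≤ ∫⁻ t in Ioc 0 a, (ENNReal.ofReal (t ^ (p.toReal⁻¹ - q.toReal⁻¹))
            * (K * ENNReal.ofReal a ^ (-s))) ^ q.toReal := by
          gcongr with t
          exact hg_const t
      _ = lorentzConst p q ^ q.toReal * B ^ q.toReal := by
          rw [setLIntegral_Ioc_lorentz_const hp0 hp hq0 hq ha,
            ← ENNReal.mul_rpow_of_nonneg _ _ hQ.le, mul_assoc, mul_left_comm _ K,
            ← ENNReal.rpow_add _ _ hA ENNReal.ofReal_ne_top,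
            show p.toReal⁻¹ + -s = -(s - p.toReal⁻¹) by ring]
  have habove : ∫⁻ t in Ioi a,
      (ENNReal.ofReal (t ^ (p.toReal⁻¹ - q.toReal⁻¹)) * rearr μ g t) ^ q.toReal
        ≤ B ^ q.toReal * ENNReal.ofReal (1 / (q.toReal * (s - p.toReal⁻¹))) := by
    rw [← setLIntegral_Ioi_rpow_mul_rpow_neg hQ hs ha]
    refine setLIntegral_mono' measurableSet_Ioi fun t ht => ?_
    gcongr
    exact hg_pow t (ha.trans ht)
  rw [lorentzNorm, if_neg hq, setLIntegral_Ioi_zero_eq_add _ ha.le,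
    ← ENNReal.rpow_rpow_inv hQ.ne' B, ← ENNReal.mul_rpow_of_nonneg _ _ (by positivity)]
  gcongr
  calc _ ≤ lorentzConst p q ^ q.toReal * B ^ q.toReal
        + B ^ q.toReal * ENNReal.ofReal (1 / (q.toReal * (s - p.toReal⁻¹))) :=
        add_le_add hbelow habove
    _ = _ := by ring

lemma exists_lorentzNorm_le_of_rearr_le {p q : ℝ≥0∞} (hp0 : 0 < p) (hq0 : 0 < q)
    (hpq : p ≠ ∞ ∨ (p = ∞ ∧ q = ∞)) {s : ℝ} {K : ℝ≥0∞} (hs : p.toReal⁻¹ < s) (hK : K ≠ ∞) :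
    ∃ C ≠ ∞, ∀ a, 0 < a → ∀ g : α → ℝ≥0∞,
      (∀ t, 0 < t → rearr μ g t ≤ K * ENNReal.ofReal t ^ (-s)) →
      (∀ t, rearr μ g t ≤ K * ENNReal.ofReal a ^ (-s)) →
      lorentzNorm μ p q g ≤ C * ENNReal.ofReal a ^ (-(s - p.toReal⁻¹)) := by
  rcases eq_or_ne q ∞ with rfl | hq
  · exact ⟨K, hK, fun a ha g hg_pow hg_const =>
      lorentzNorm_top_le_of_rearr_le p hs ha hg_pow hg_const⟩
  have hp : p ≠ ∞ := hpq.resolve_right fun h => hq h.2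
  have hL := lorentzConst_ne_top p q
  refine ⟨(lorentzConst p q ^ q.toReal + ENNReal.ofReal (1 / (q.toReal * (s - p.toReal⁻¹))))
    ^ q.toReal⁻¹ * K, by finiteness, fun a ha g hg_pow hg_const => ?_⟩
  rw [mul_assoc]
  exact lorentzNorm_le_of_rearr_le hp0 hp hq0 hq hs ha hg_pow hg_const

lemma QBFS.N_indicator_const (X : QBFS μ) {c : ℝ≥0∞} (hc : c ≠ ∞) (F : Set α) :
    X.N (F.indicator fun _ => c) = c * X.N (F.indicator 1) := by
  have : F.indicator (fun _ => c) = fun x => c * F.indicator 1 x := by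
    ext x
    by_cases hx : x ∈ F <;> simp [hx]
  rw [this, X.smul c _ hc]

lemma acInftyFun_le {X Y : QBFS μ} {a : ℝ} {c : ℝ≥0∞}
    (h : ∀ f, X.N f ≤ 1 →
      ∃ E, MeasurableSet E ∧ μ E ≤ ENNReal.ofReal a ∧ Y.N (Eᶜ.indicator f) ≤ c) :
    acInftyFun X Y a ≤ c :=
  iSup₂_le fun f hf => by
    obtain ⟨E, hE, hμE, hfE⟩ := h f hf
    exact (iInf₂_le E ⟨hE, hμE⟩).trans hfE

lemma le_acInftyFun {X Y : QBFS μ} {a : ℝ} {c : ℝ≥0∞} {f : α → ℝ≥0∞} (hf : X.N f ≤ 1)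
    (h : ∀ E, MeasurableSet E → μ E ≤ ENNReal.ofReal a → c ≤ Y.N (Eᶜ.indicator f)) :
    c ≤ acInftyFun X Y a :=
  (le_iInf₂ fun E hE => h E hE.1 hE.2).trans
    (le_biSup (fun f => ⨅ E ∈ {E : Set α | MeasurableSet E ∧ μ E ≤ ENNReal.ofReal a},
      Y.N (Eᶜ.indicator f)) hf)

lemma acInfty_of_acInftyFun_le {X Y : QBFS μ} {C : ℝ≥0∞} (hC : C ≠ ∞) {δ : ℝ} (hδ : 0 < δ)
    (h : ∀ a, 0 < a → acInftyFun X Y a ≤ C * ENNReal.ofReal a ^ (-δ)) : AcInfty X Y := by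
  have hpow : Tendsto (fun a : ℝ => ENNReal.ofReal a ^ (-δ)) atTop (𝓝 0) := by
    refine (ENNReal.ofReal_zero ▸ ENNReal.tendsto_ofReal (tendsto_rpow_neg_atTop hδ)).congr' ?_
    filter_upwards [eventually_gt_atTop 0] with a ha using (ENNReal.ofReal_rpow_of_pos ha).symm
  have hlim := ENNReal.Tendsto.const_mul hpow (Or.inr hC)
  rw [mul_zero] at hlim
  exact tendsto_of_tendsto_of_tendsto_of_le_of_le' tendsto_const_nhds hlim
    (Eventually.of_forall fun _ => zero_le) ((eventually_gt_atTop 0).mono h)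

lemma not_acInfty_of_le_acInftyFun {X Y : QBFS μ} {ε : ℝ≥0∞} (hε : 0 < ε)
    (h : ∀ a, ε ≤ acInftyFun X Y a) : ¬AcInfty X Y := fun hXY =>
  let ⟨a, ha⟩ := (hXY.eventually_lt_const hε).exists
  (h a).not_gt ha

lemma half_le_measure_sdiff {E F : Set α} (hE : 2 * μ E ≤ μ F) (hF : μ F ≠ ∞) :
    μ F / 2 ≤ μ (F \ E) := by
  have hE' : μ E ≤ μ F / 2 := by
    rwa [ENNReal.le_div_iff_mul_le (Or.inl two_ne_zero) (Or.inl ENNReal.ofNat_ne_top), mul_comm]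
  calc μ F / 2 = μ F - μ F / 2 := (ENNReal.sub_half hF).symm
    _ ≤ μ F - μ E := tsub_le_tsub_left hE' _
    _ ≤ μ (F \ E) := le_measure_sdiff

theorem acInfty_of_lt {p₁ q₁ p₂ q₂ : ℝ≥0∞} (hp₁ : 0 < p₁) (hq₁ : 0 < q₁) (hp₂ : 0 < p₂)
    (hq₂ : 0 < q₂) (h2 : p₂ ≠ ∞ ∨ (p₂ = ∞ ∧ q₂ = ∞)) {X1 X2 : QBFS μ}
    (hX1 : ∀ f, X1.N f = lorentzNorm μ p₁ q₁ f) (hX2 : ∀ f, X2.N f = lorentzNorm μ p₂ q₂ f)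
    (hp : p₁ < p₂) : AcInfty X1 X2 := by
  have hs : p₂.toReal⁻¹ < p₁.toReal⁻¹ := by
    rw [← ENNReal.toReal_inv, ← ENNReal.toReal_inv]
    exact ENNReal.toReal_strict_mono (ENNReal.inv_ne_top.2 hp₁.ne') (ENNReal.inv_lt_inv.2 hp)
  have hK : (lorentzConst p₁ q₁)⁻¹ ≠ ∞ :=
    ENNReal.inv_ne_top.2 (lorentzConst_pos hp₁ hq₁ (Or.inl hp.ne_top)).ne'
  have hweak : ∀ f, X1.N f ≤ 1 → ∀ t, 0 < t →
      rearr μ f t ≤ (lorentzConst p₁ q₁)⁻¹ * ENNReal.ofReal t ^ (-p₁.toReal⁻¹) := fun f hf _ =>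
    rearr_le_of_lorentzNorm_le_one hp₁ hq₁ (Or.inl hp.ne_top) (hX1 f ▸ hf)
  obtain ⟨C, hC, hbound⟩ := exists_lorentzNorm_le_of_rearr_le (μ := μ) hp₂ hq₂ h2 hs hK
  refine acInfty_of_acInftyFun_le hC (sub_pos.2 hs) fun a ha => acInftyFun_le fun f hf => ?_
  obtain ⟨E, hE, hμE, hfE⟩ := exists_measure_le_indicator_compl_le_rearr (μ := μ) f a
  refine ⟨E, hE, hμE, hX2 _ ▸ hbound a ha _ (fun t ht => ?_) fun t => ?_⟩
  · exact (rearr_mono (indicator_le_self _ f) t).trans (hweak f hf t ht)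
  · exact (rearr_le_of_forall_le hfE t).trans (hweak f hf a ha)

theorem not_acInfty_of_le [SigmaFinite μ] (hμ : μ univ = ∞) {p₁ q₁ p₂ q₂ : ℝ≥0∞}
    (hp₁ : 0 < p₁) (hq₁ : 0 < q₁) (hp₂ : 0 < p₂) (hq₂ : 0 < q₂)
    (h1 : p₁ ≠ ∞ ∨ (p₁ = ∞ ∧ q₁ = ∞)) (h2 : p₂ ≠ ∞ ∨ (p₂ = ∞ ∧ q₂ = ∞)) {X1 X2 : QBFS μ}
    (hX1 : ∀ f, X1.N f = lorentzNorm μ p₁ q₁ f) (hX2 : ∀ f, X2.N f = lorentzNorm μ p₂ q₂ f)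
    (hp : p₂ ≤ p₁) : ¬AcInfty X1 X2 := by
  set L₁ := lorentzConst p₁ q₁
  set L₂ := lorentzConst p₂ q₂
  have hL₁ : L₁ ≠ 0 := (lorentzConst_pos hp₁ hq₁ h1).ne'
  have hL₁' : L₁ ≠ ∞ := lorentzConst_ne_top p₁ q₁
  have hr : p₁.toReal⁻¹ ≤ p₂.toReal⁻¹ := by
    rw [← ENNReal.toReal_inv, ← ENNReal.toReal_inv]
    exact ENNReal.toReal_mono (ENNReal.inv_ne_top.2 hp₂.ne') (ENNReal.inv_le_inv.2 hp)
  have hε : 0 < L₂ / (L₁ * 2 ^ p₂.toReal⁻¹) :=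
    ENNReal.div_pos (lorentzConst_pos hp₂ hq₂ h2).ne' (by finiteness)
  refine not_acInfty_of_le_acInftyFun hε fun a => ?_
  obtain ⟨F, -, -, hF_gt, hF_top⟩ := Measure.exists_subset_measure_lt_top (μ := μ)
    MeasurableSet.univ (r := max (2 * ENNReal.ofReal a) 1) (by rw [hμ]; finiteness)
  have hF1 : 1 ≤ μ F := (le_max_right _ _).trans hF_gt.le
  have hF0 : μ F ≠ 0 := (zero_lt_one.trans_le hF1).ne'
  set M := μ F ^ p₁.toReal⁻¹
  have hM : M ≠ 0 := (ENNReal.rpow_pos (pos_iff_ne_zero.2 hF0) hF_top.ne).ne'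
  have hM' : M ≠ ∞ := ENNReal.rpow_ne_top_of_nonneg (by positivity) hF_top.ne
  have hc : (L₁ * M)⁻¹ ≠ ∞ := ENNReal.inv_ne_top.2 (mul_ne_zero hL₁ hM)
  refine le_acInftyFun (f := F.indicator fun _ => (L₁ * M)⁻¹) ?_ fun E _ hμE => ?_
  · rw [X1.N_indicator_const hc, hX1, lorentzNorm_indicator hp₁ hq₁ h1 hF0 hF_top.ne]
    exact (ENNReal.inv_mul_cancel (mul_ne_zero hL₁ hM) (ENNReal.mul_ne_top hL₁' hM')).le
  have hFE : μ F / 2 ≤ μ (F \ E) := half_le_measure_sdiff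
    ((mul_le_mul_right hμE 2).trans ((le_max_left _ _).trans hF_gt.le)) hF_top.ne
  have hFE0 : μ (F \ E) ≠ 0 := ((ENNReal.div_pos hF0 ENNReal.ofNat_ne_top).trans_le hFE).ne'
  rw [indicator_indicator, ← sdiff_eq_compl_inter, X2.N_indicator_const hc, hX2,
    lorentzNorm_indicator hp₂ hq₂ h2 hFE0 (measure_ne_top_of_subset sdiff_subset hF_top.ne)]
  calc L₂ / (L₁ * 2 ^ p₂.toReal⁻¹) = (L₁ * M)⁻¹ * (L₂ * (M / 2 ^ p₂.toReal⁻¹)) := by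
        rw [div_eq_mul_inv, div_eq_mul_inv, ENNReal.mul_inv (Or.inl hL₁) (Or.inl hL₁'),
          ENNReal.mul_inv (Or.inl hL₁) (Or.inl hL₁')]
        calc _ = (M⁻¹ * M) * (L₂ * (L₁⁻¹ * (2 ^ p₂.toReal⁻¹)⁻¹)) := by
              rw [ENNReal.inv_mul_cancel hM hM', one_mul]
          _ = _ := by ring
    _ ≤ (L₁ * M)⁻¹ * (L₂ * (μ F / 2) ^ p₂.toReal⁻¹) := by
        rw [ENNReal.div_rpow_of_nonneg _ _ (by positivity)]
        gcongr
        exact ENNReal.rpow_le_rpow_of_exponent_le hF1 hr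
    _ ≤ (L₁ * M)⁻¹ * (L₂ * μ (F \ E) ^ p₂.toReal⁻¹) := by gcongr

theorem statement17_general [SigmaFinite μ] (hμ : μ Set.univ = ∞)
    (p₁ q₁ p₂ q₂ : ℝ≥0∞)
    (hp₁ : 0 < p₁) (hq₁ : 0 < q₁) (hp₂ : 0 < p₂) (hq₂ : 0 < q₂)
    (h1 : p₁ ≠ ∞ ∨ (p₁ = ∞ ∧ q₁ = ∞)) (h2 : p₂ ≠ ∞ ∨ (p₂ = ∞ ∧ q₂ = ∞))
    (X1 X2 : QBFS μ)
    (hX1 : ∀ f : α → ℝ≥0∞, X1.N f = lorentzNorm μ p₁ q₁ f)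
    (hX2 : ∀ f : α → ℝ≥0∞, X2.N f = lorentzNorm μ p₂ q₂ f) :
    AcInfty X1 X2 ↔ p₁ < p₂ :=
  ⟨fun h => not_le.1 fun hle => not_acInfty_of_le hμ hp₁ hq₁ hp₂ hq₂ h1 h2 hX1 hX2 hle h,
    acInfty_of_lt hp₁ hq₁ hp₂ hq₂ h2 hX1 hX2⟩

/-- for Lorentz spaces, `L^{p₁,q₁} ⊂∞ L^{p₂,q₂}` iff `p₁ < p₂`. -/
theorem statement17 [SigmaFinite μ] [NullSingletonClass μ] (hμ : μ Set.univ = ∞)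
    (p₁ q₁ p₂ q₂ : ℝ≥0∞)
    (hp₁ : 0 < p₁) (hq₁ : 0 < q₁) (hp₂ : 0 < p₂) (hq₂ : 0 < q₂)
    (h1 : p₁ ≠ ∞ ∨ (p₁ = ∞ ∧ q₁ = ∞)) (h2 : p₂ ≠ ∞ ∨ (p₂ = ∞ ∧ q₂ = ∞))
    (X1 X2 : QBFS μ)
    (hX1 : ∀ f : α → ℝ≥0∞, X1.N f = lorentzNorm μ p₁ q₁ f)
    (hX2 : ∀ f : α → ℝ≥0∞, X2.N f = lorentzNorm μ p₂ q₂ f) :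
    AcInfty X1 X2 ↔ p₁ < p₂ :=
  statement17_general hμ p₁ q₁ p₂ q₂ hp₁ hq₁ hp₂ hq₂ h1 h2 X1 X2 hX1 hX2
end
end
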